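/- Let n ≥ 1, let p₁ ≥ p₂ ≥ … ≥ pₙ ≥ 1 be integers, let S be the diagonal vector field S(x) = (p₁x₁,…,pₙxₙ) on ℂⁿ, and let X : ℂⁿ → ℂⁿ be an entire holomorphic map, not identically zero, satisfying [S,X](x) := DX(x)(S(x)) - S(X(x)) = λ·X(x) for all x ∈ ℂⁿ, where λ ∈ ℂ. Then λ is an integer with λ ≥ -p₁, and X is a polynomial map, i.e., each component of X is given by evaluation of a polynomial in ℂ[x₁,…,xₙ]. -/

import Mathlib

/-!
Along the flow `e^{tS} x = (e^{p_i t} x_i)` of `S`, the bracket condition becomes the linear ODE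
`d/dt X_j(e^{tS} x) = (λ + p_j) X_j(e^{tS} x)`, so every component is quasi-homogeneous:
`X_j(e^{tS} x) = e^{(λ + p_j) t} X_j(x)`. Since `e^{2πiS} = id`, a nonvanishing component forces
`λ + p_j ∈ ℤ`, and letting `t → -∞` along the reals (all `p_i > 0`) forces `λ + p_j ≥ 0`.
Quasi-homogeneity of degree `N ≥ 0` gives the growth bound `|X_j(x)| ≤ C ‖x‖^N`, so by Cauchy's
estimates `X_j` is a polynomial of degree `≤ N` on every coordinate line, and Lagrange
interpolation, one variable at a time, makes it a polynomial.
-/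

open Complex Polynomial Filter Topology

theorem Differentiable.iteratedDeriv_eq_zero_of_norm_le {f : ℂ → ℂ} (hf : Differentiable ℂ f)
    {C : ℝ} {N k : ℕ} (hC : ∀ z, 1 ≤ ‖z‖ → ‖f z‖ ≤ C * ‖z‖ ^ N) (hk : N < k) :
    iteratedDeriv k f 0 = 0 := by
  have hcauchy : ∀ R : ℝ, 1 ≤ R → ‖iteratedDeriv k f 0‖ ≤ k.factorial * C / R ^ (k - N) := by
    intro R hR
    have hR0 : 0 < R := by linarith
    calc ‖iteratedDeriv k f 0‖ ≤ k.factorial * (C * R ^ N) / R ^ k :=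
          Complex.norm_iteratedDeriv_le_of_forall_mem_sphere_norm_le k hR0 hf.diffContOnCl
            fun z hz => by
              rw [mem_sphere_zero_iff_norm] at hz
              simpa [hz] using hC z (hz ▸ hR)
      _ = k.factorial * C / R ^ (k - N) := by
          rw [← Nat.sub_add_cancel hk.le, pow_add]
          field_simp
          simp
  have hlim : Tendsto (fun R : ℝ => k.factorial * C / R ^ (k - N)) atTop (𝓝 0) :=
    tendsto_const_nhds.div_atTop (tendsto_pow_atTop (by omega))
  exact norm_le_zero_iff.mp <| ge_of_tendsto hlim <| (eventually_ge_atTop 1).mono hcauchy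

theorem Differentiable.exists_polynomial_of_norm_le {f : ℂ → ℂ} (hf : Differentiable ℂ f)
    {C : ℝ} {N : ℕ} (hC : ∀ z, 1 ≤ ‖z‖ → ‖f z‖ ≤ C * ‖z‖ ^ N) :
    ∃ P : ℂ[X], P.natDegree ≤ N ∧ ∀ z, f z = P.eval z := by
  refine ⟨∑ k ∈ Finset.range (N + 1),
    Polynomial.C ((k.factorial : ℂ)⁻¹ * iteratedDeriv k f 0) * X ^ k,
    ?_, fun z => ?_⟩
  · refine Polynomial.natDegree_sum_le_of_forall_le _ _ fun k hk => ?_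
    refine (natDegree_C_mul_X_pow_le _ _).trans ?_
    simpa [Nat.lt_succ_iff] using hk
  · rw [← taylorSeries_eq_of_entire' 0 z hf, tsum_eq_sum (s := Finset.range (N + 1))]
    · simp [eval_finsetSum]
    · intro k hk
      simp only [Finset.mem_range, not_lt] at hk
      simp [hf.iteratedDeriv_eq_zero_of_norm_le hC (by omega : N < k)]

theorem Polynomial.eval_eq_sum_lagrangeBasis {K : Type*} [Field K] [CharZero K] {N : ℕ} {P : K[X]}
    (hP : P.natDegree ≤ N) (t : K) :
    P.eval t = ∑ l : Fin (N + 1), P.eval ((l : ℕ) : K) *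
      (Lagrange.basis Finset.univ (fun l : Fin (N + 1) => ((l : ℕ) : K)) l).eval t := by
  have hinj : Set.InjOn (fun l : Fin (N + 1) => ((l : ℕ) : K))
      ↑(Finset.univ : Finset (Fin (N + 1))) :=
    fun a _ b _ hab => Fin.ext (Nat.cast_injective hab)
  have hdeg : P.degree < (Finset.univ : Finset (Fin (N + 1))).card := by
    rw [Finset.card_univ, Fintype.card_fin]
    exact (degree_le_natDegree.trans (WithBot.coe_le_coe.mpr hP)).trans_lt
      (WithBot.coe_lt_coe.mpr N.lt_succ_self)
  conv_lhs => rw [Lagrange.eq_interpolate hinj hdeg]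
  simp [Lagrange.interpolate_apply, eval_finsetSum]

theorem MvPolynomial.eval_aeval_X {K σ : Type*} [CommRing K] (x : σ → K) (i : σ) (P : K[X]) :
    MvPolynomial.eval x (Polynomial.aeval (MvPolynomial.X i) P) = P.eval (x i) := by
  simpa [coe_aeval_eq_eval, Polynomial.aeval_def] using
    (Polynomial.aeval_algHom_apply (MvPolynomial.aeval x) (X i) P).symm

theorem exists_mvPolynomial_of_forall_update {K : Type*} [Field K] [CharZero K] {N : ℕ} :
    ∀ {n : ℕ} (F : (Fin n → K) → K),
      (∀ a k, ∃ P : K[X], P.natDegree ≤ N ∧ ∀ t, F (Function.update a k t) = P.eval t) →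
      ∃ Q : MvPolynomial (Fin n) K, ∀ x, F x = MvPolynomial.eval x Q
  | 0, F, _ => ⟨MvPolynomial.C (F 0), fun x => by simp [Subsingleton.elim x 0]⟩
  | n + 1, F, hF => by
    set B := Lagrange.basis Finset.univ (fun l : Fin (N + 1) => ((l : ℕ) : K))
    have hfirst : ∀ t y,
        F (Fin.cons t y) = ∑ l : Fin (N + 1), F (Fin.cons (l : ℕ) y) * (B l).eval t := by
      intro t y
      obtain ⟨P, hPdeg, hP⟩ := hF (Fin.cons t y) 0
      simp only [Fin.update_cons_zero] at hP
      rw [hP, P.eval_eq_sum_lagrangeBasis hPdeg]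
      simp only [hP, B]
    have hrest : ∀ l : Fin (N + 1), ∃ Q : MvPolynomial (Fin n) K,
        ∀ y, F (Fin.cons (l : ℕ) y) = MvPolynomial.eval y Q := by
      intro l
      refine exists_mvPolynomial_of_forall_update (N := N) _ fun a k => ?_
      obtain ⟨P, hPdeg, hP⟩ := hF (Fin.cons (l : ℕ) a) k.succ
      exact ⟨P, hPdeg, fun t => by rw [Fin.cons_update, hP]⟩
    choose Q hQ using hrest
    refine ⟨∑ l, MvPolynomial.rename Fin.succ (Q l) * Polynomial.aeval (MvPolynomial.X 0) (B l),
      fun x => ?_⟩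
    rw [← Fin.cons_self_tail x, hfirst]
    simp [hQ, MvPolynomial.eval_rename, MvPolynomial.eval_aeval_X, Function.comp_def]
    rfl

theorem Differentiable.exists_polynomial_update {ι : Type*} [Fintype ι] [DecidableEq ι]
    {F : (ι → ℂ) → ℂ} (hF : Differentiable ℂ F) {C : ℝ} {N : ℕ}
    (hC : ∀ x, 1 ≤ ‖x‖ → ‖F x‖ ≤ C * ‖x‖ ^ N) (a : ι → ℂ) (k : ι) :
    ∃ P : ℂ[X], P.natDegree ≤ N ∧ ∀ t, F (Function.update a k t) = P.eval t := by
  have hline : Differentiable ℂ fun t => Function.update a k t :=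
    fun t => (hasDerivAt_update a k t).differentiableAt
  refine (hF.comp hline).exists_polynomial_of_norm_le (C := C * max 1 ‖a‖ ^ N) fun t ht => ?_
  have hlower : ‖t‖ ≤ ‖Function.update a k t‖ := by
    simpa using norm_le_pi_norm (Function.update a k t) k
  have hupper : ‖Function.update a k t‖ ≤ max 1 ‖a‖ * ‖t‖ := by
    refine pi_norm_le_iff_of_nonneg (by positivity) |>.mpr fun i => ?_
    rcases eq_or_ne i k with rfl | hik
    · simpa using le_mul_of_one_le_left (norm_nonneg t) (le_max_left 1 ‖a‖)
    · rw [Function.update_of_ne hik]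
      exact (norm_le_pi_norm a i).trans <| (le_max_right 1 ‖a‖).trans <|
        le_mul_of_one_le_right (by positivity) ht
  have hbound := hC _ (ht.trans hlower)
  have hC0 : 0 ≤ C := nonneg_of_mul_nonneg_left ((norm_nonneg _).trans hbound)
    (pow_pos (by linarith) N)
  calc ‖F (Function.update a k t)‖ ≤ C * ‖Function.update a k t‖ ^ N := hbound
    _ ≤ C * (max 1 ‖a‖ * ‖t‖) ^ N := by gcongr
    _ = C * max 1 ‖a‖ ^ N * ‖t‖ ^ N := by ring

theorem tendsto_exp_mul_ofReal_atBot {c : ℝ} (hc : 0 < c) :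
    Tendsto (fun t : ℝ => exp (c * t)) atBot (𝓝 0) := by
  refine tendsto_zero_iff_norm_tendsto_zero.mpr ?_
  simpa [Complex.norm_exp] using tendsto_id.const_mul_atBot hc

noncomputable def diagonalFlow {n : ℕ} (p : Fin n → ℤ) (t : ℂ) (x : Fin n → ℂ) : Fin n → ℂ :=
  fun i => exp (p i * t) * x i

section diagonalFlow

variable {n : ℕ} {p : Fin n → ℤ} {x : Fin n → ℂ}

theorem diagonalFlow_zero : diagonalFlow p 0 x = x := by
  ext i; simp [diagonalFlow]

theorem diagonalFlow_add (s t : ℂ) :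
    diagonalFlow p (s + t) x = diagonalFlow p s (diagonalFlow p t x) := by
  ext i; simp only [diagonalFlow, mul_add, Complex.exp_add]; ring

theorem diagonalFlow_two_pi_I : diagonalFlow p (2 * Real.pi * I) x = x := by
  ext i; simp [diagonalFlow, exp_int_mul_two_pi_mul_I]

theorem hasDerivAt_diagonalFlow (t : ℂ) :
    HasDerivAt (fun t => diagonalFlow p t x) (fun i => (p i : ℂ) * diagonalFlow p t x i) t := by
  refine hasDerivAt_pi.mpr fun i => ?_
  exact (((hasDerivAt_id t).const_mul (p i : ℂ)).cexp.mul_const (x i)).congr_deriv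
    (by simp only [diagonalFlow, id]; ring)

theorem norm_diagonalFlow_apply_ofReal (t : ℝ) (i : Fin n) :
    ‖diagonalFlow p t x i‖ = Real.exp (p i * t) * ‖x i‖ := by
  simp [diagonalFlow, Complex.norm_exp]

theorem tendsto_diagonalFlow_atBot (hp : ∀ i, 0 < p i) :
    Tendsto (fun t : ℝ => diagonalFlow p t x) atBot (𝓝 0) := by
  refine tendsto_pi_nhds.mpr fun i => ?_
  have := (tendsto_exp_mul_ofReal_atBot (Int.cast_pos.mpr (hp i))).mul_const (x i)
  simpa [diagonalFlow] using this

theorem norm_diagonalFlow_neg_log_le (hp : ∀ i, 0 < p i) (hx : 1 ≤ ‖x‖) :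
    ‖diagonalFlow p (-(Real.log ‖x‖ : ℂ)) x‖ ≤ 1 := by
  refine pi_norm_le_iff_of_nonneg zero_le_one |>.mpr fun i => ?_
  have hlog : 0 ≤ Real.log ‖x‖ := Real.log_nonneg hx
  have hpi : (1 : ℝ) ≤ p i := by exact_mod_cast hp i
  calc ‖diagonalFlow p (-(Real.log ‖x‖ : ℂ)) x i‖
      = Real.exp (-(p i * Real.log ‖x‖)) * ‖x i‖ := by
        rw [← Complex.ofReal_neg, norm_diagonalFlow_apply_ofReal, mul_neg]
    _ ≤ Real.exp (-Real.log ‖x‖) * ‖x‖ := by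
        gcongr
        · exact le_mul_of_one_le_left hlog hpi
        · exact norm_le_pi_norm x i
    _ = 1 := by
        rw [Real.exp_neg, Real.exp_log (by linarith)]
        exact inv_mul_cancel₀ (by linarith)

end diagonalFlow

theorem eq_exp_mul_of_hasDerivAt {f : ℂ → ℂ} {μ : ℂ} (hf : ∀ t, HasDerivAt f (μ * f t) t)
    (t : ℂ) : f t = exp (μ * t) * f 0 := by
  have hderiv : ∀ t, HasDerivAt (fun t => exp (-μ * t) * f t) 0 t := by
    intro t
    exact ((((hasDerivAt_id t).const_mul (-μ)).cexp).mul (hf t)).congr_deriv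
      (by simp only [id]; ring)
  have hconst := is_const_of_deriv_eq_zero (fun t => (hderiv t).differentiableAt)
    (fun t => (hderiv t).deriv) t 0
  simp only [mul_zero, Complex.exp_zero, one_mul] at hconst
  rw [← hconst, ← mul_assoc, ← Complex.exp_add]
  simp

def IsQuasiHomogeneous {n : ℕ} (p : Fin n → ℤ) (μ : ℂ) (F : (Fin n → ℂ) → ℂ) : Prop :=
  ∀ t x, F (diagonalFlow p t x) = exp (μ * t) * F x

theorem isQuasiHomogeneous_of_lie_bracket_eq_smul {n : ℕ} {p : Fin n → ℤ}
    {X : (Fin n → ℂ) → (Fin n → ℂ)} (hX : Differentiable ℂ X) {lam : ℂ}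
    (h : ∀ x : Fin n → ℂ,
      (fderiv ℂ X x (fun i => (p i : ℂ) * x i)) - (fun i => (p i : ℂ) * X x i) = lam • X x)
    (j : Fin n) : IsQuasiHomogeneous p (lam + p j) fun x => X x j := by
  intro t x
  have hderiv : ∀ s, HasDerivAt (fun s => X (diagonalFlow p s x) j)
      ((lam + p j) * X (diagonalFlow p s x) j) s := by
    intro s
    have hcomp := hasDerivAt_pi.mp
      ((hX _).hasFDerivAt.comp_hasDerivAt s (hasDerivAt_diagonalFlow (p := p) (x := x) s)) j
    refine hcomp.congr_deriv ?_
    have hj := congrFun (h (diagonalFlow p s x)) j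
    simp only [Pi.sub_apply, Pi.smul_apply, smul_eq_mul] at hj
    linear_combination hj
  simpa [diagonalFlow_zero] using eq_exp_mul_of_hasDerivAt hderiv t

namespace IsQuasiHomogeneous

variable {n : ℕ} {p : Fin n → ℤ} {F : (Fin n → ℂ) → ℂ}

theorem exists_eq_intCast {μ : ℂ} (hF : IsQuasiHomogeneous p μ F) {x : Fin n → ℂ}
    (hx : F x ≠ 0) : ∃ k : ℤ, μ = k := by
  have hper : exp (μ * (2 * Real.pi * I)) = 1 := by
    have := hF (2 * Real.pi * I) x
    rw [diagonalFlow_two_pi_I] at this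
    exact (mul_eq_right₀ hx).mp this.symm
  obtain ⟨k, hk⟩ := Complex.exp_eq_one_iff.mp hper
  exact ⟨k, mul_right_cancel₀ two_pi_I_ne_zero hk⟩

theorem degree_nonneg {k : ℤ} (hF : IsQuasiHomogeneous p k F) (hp : ∀ i, 0 < p i)
    (hcont : Continuous F) {x : Fin n → ℂ} (hx : F x ≠ 0) : 0 ≤ k := by
  by_contra! hk
  have hexp : Tendsto (fun t : ℝ => exp (-k * t)) atBot (𝓝 0) := by
    simpa using tendsto_exp_mul_ofReal_atBot (c := -k) (by exact_mod_cast neg_pos.mpr hk)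
  have hlim : Tendsto (fun t : ℝ => exp (-k * t) * F (diagonalFlow p t x)) atBot (𝓝 (0 * F 0)) :=
    hexp.mul ((hcont.tendsto 0).comp (tendsto_diagonalFlow_atBot hp))
  have hconst : (fun t : ℝ => exp (-k * t) * F (diagonalFlow p t x)) = fun _ => F x := by
    ext t
    rw [hF, ← mul_assoc, ← Complex.exp_add]
    simp
  rw [hconst, zero_mul] at hlim
  exact hx (tendsto_nhds_unique tendsto_const_nhds hlim)

theorem norm_le_mul_norm_pow {N : ℕ} (hF : IsQuasiHomogeneous p N F) (hp : ∀ i, 0 < p i)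
    (hcont : Continuous F) : ∃ C, ∀ x, 1 ≤ ‖x‖ → ‖F x‖ ≤ C * ‖x‖ ^ N := by
  obtain ⟨C, hC⟩ := (isCompact_closedBall (0 : Fin n → ℂ) 1).exists_bound_of_continuousOn
    hcont.continuousOn
  refine ⟨C, fun x hx => ?_⟩
  set y := diagonalFlow p (-(Real.log ‖x‖ : ℂ)) x
  have hy : F x = exp (N * Real.log ‖x‖) * F y := by
    rw [← hF, ← diagonalFlow_add, add_neg_cancel, diagonalFlow_zero]
  have hnorm : ‖exp (N * Real.log ‖x‖)‖ = ‖x‖ ^ N := by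
    simp [Complex.norm_exp, Real.exp_nat_mul, Real.exp_log (one_pos.trans_le hx)]
  rw [hy, norm_mul, hnorm, mul_comm]
  gcongr
  exact hC y (mem_closedBall_zero_iff.mpr (norm_diagonalFlow_neg_log_le hp hx))

theorem exists_mvPolynomial {μ : ℂ} (hF : IsQuasiHomogeneous p μ F) (hp : ∀ i, 0 < p i)
    (hdiff : Differentiable ℂ F) :
    ∃ Q : MvPolynomial (Fin n) ℂ, ∀ x, F x = MvPolynomial.eval x Q := by
  by_cases hzero : ∃ x, F x ≠ 0
  swap
  · exact ⟨0, fun x => by simpa using not_exists_not.mp hzero x⟩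
  obtain ⟨x, hx⟩ := hzero
  obtain ⟨k, rfl⟩ := hF.exists_eq_intCast hx
  lift k to ℕ using hF.degree_nonneg hp hdiff.continuous hx
  obtain ⟨C, hC⟩ := (hF : IsQuasiHomogeneous p (k : ℕ) F).norm_le_mul_norm_pow hp hdiff.continuous
  exact exists_mvPolynomial_of_forall_update F (hdiff.exists_polynomial_update hC)

end IsQuasiHomogeneous

/-- Proposition 2.1(c): if `p₁ ≥ … ≥ pₙ ≥ 1` and `X` is an entire
holomorphic vector field on `ℂⁿ`, not identically zero, with `[S,X] = λ·X`,
then `λ` is an integer, `λ ≥ -p₁`, and `X` is a polynomial map. -/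
theorem stmt4 (n : ℕ) (hn : 0 < n) (p : Fin n → ℤ)
    (hanti : Antitone p) (hpos : ∀ i, 1 ≤ p i)
    (X : (Fin n → ℂ) → (Fin n → ℂ)) (hX : Differentiable ℂ X)
    (hX0 : ∃ x, X x ≠ 0) (lam : ℂ)
    (h : ∀ x : Fin n → ℂ,
      (fderiv ℂ X x (fun i => (p i : ℂ) * x i)) - (fun i => (p i : ℂ) * X x i)
        = lam • X x) :
    (∃ m : ℤ, lam = (m : ℂ) ∧ -(p ⟨0, hn⟩) ≤ m) ∧
      ∀ j : Fin n, ∃ Q : MvPolynomial (Fin n) ℂ,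
        ∀ x : Fin n → ℂ, X x j = MvPolynomial.eval x Q := by
  have hquasi := isQuasiHomogeneous_of_lie_bracket_eq_smul hX h
  have hXj : ∀ j, Differentiable ℂ fun x => X x j := fun j => differentiable_pi.mp hX j
  obtain ⟨x₀, hx₀⟩ := hX0
  obtain ⟨j₀, hj₀⟩ := Function.ne_iff.mp hx₀
  obtain ⟨k, hk⟩ := (hquasi j₀).exists_eq_intCast hj₀
  have hk0 : 0 ≤ k := (hk ▸ hquasi j₀).degree_nonneg hpos (hXj j₀).continuous hj₀
  refine ⟨⟨k - p j₀, by push_cast; linear_combination hk, ?_⟩,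
    fun j => (hquasi j).exists_mvPolynomial hpos (hXj j)⟩
  have := hanti (show (⟨0, hn⟩ : Fin n) ≤ j₀ from Nat.zero_le _)
  omega
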